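/- Let f be a morphism, w an infinite word with f(w) q-quasiperiodic where 2|q| ≤ |f(α)| for all letters α. If the first letter a of w is not recurrent in w, then there exist a decomposition exhibiting words u, v and a letter b with a not occurring after its last occurrence, such that a u (b v)^ω is not quasiperiodic while f(a u (b v)^ω) is q-quasiperiodic; hence f is weakly quasiperiodic on infinite words. -/

import Mathlib

/-!
Let `s` be the last occurrence of `a = w 0` in `w`. Since every letter of `f(w)` is a letter of
`q`, the windows of length `2|q|` of `f(w)` centred at the boundaries between the images of
`w s, w (s+1), …` take finitely many values, so two of them coincide, at the boundaries before
`w N` and `w M` with `s < N < M`. Put `x = w[s, N) (w[N, M))^ω = a u (b v)^ω`. Every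
`|q|`-neighbourhood of a position of `f(x)` reappears in `f(w)` (the coinciding windows glue the
periods together, and `f(a)` starts with `q` because `f(w)` does), so `f(x)` is `q`-covered,
while `x` is not quasiperiodic because its first letter never occurs again.
-/

namespace QPm

variable {A : Type*}

/-- Image of a finite word under a morphism given by images of letters. -/
def applyF (f : A → List A) (w : List A) : List A := (w.map f).flatten

/-- A morphism is non-erasing if images of letters are nonempty. -/
def NonErasing (f : A → List A) : Prop := ∀ a, f a ≠ []

/-- `wpow u k` is the `k`-fold concatenation `u^k`. -/
def wpow (u : List A) (k : ℕ) : List A := (List.replicate k u).flatten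

/-- Every position of `w` is covered by an occurrence of `q` in `w`. -/
def Covers (q w : List A) : Prop :=
  ∀ i < w.length, ∃ j, j ≤ i ∧ i < j + q.length ∧ j + q.length ≤ w.length ∧
    (w.drop j).take q.length = q

/-- `w` is `q`-quasiperiodic. -/
def QP (q w : List A) : Prop := q ≠ [] ∧ w ≠ q ∧ Covers q w

def Quasiperiodic (w : List A) : Prop := ∃ q, QP q w

def Superprimitive (w : List A) : Prop := ¬ Quasiperiodic w

/-- `q` is THE quasiperiod (shortest quasiperiod) of `w`. -/
def IsQuasiperiod (q w : List A) : Prop :=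
  QP q w ∧ ∀ q', QP q' w → q.length ≤ q'.length

/-- Every position of the infinite word `x` is covered by an occurrence of `q`. -/
def InfCovers (q : List A) (x : ℕ → A) : Prop :=
  ∀ i : ℕ, ∃ j, j ≤ i ∧ i < j + q.length ∧
    ∀ t (ht : t < q.length), x (j + t) = q.get ⟨t, ht⟩

/-- The infinite word `x` is `q`-quasiperiodic. -/
def InfQP (q : List A) (x : ℕ → A) : Prop := q ≠ [] ∧ InfCovers q x

def InfQuasiperiodic (x : ℕ → A) : Prop := ∃ q, InfQP q x

/-- `q` is THE quasiperiod (shortest quasiperiod) of the infinite word `x`. -/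
def IsInfQuasiperiod (q : List A) (x : ℕ → A) : Prop :=
  InfQP q x ∧ ∀ q', InfQP q' x → q.length ≤ q'.length

/-- Image of an infinite word under a (non-erasing) morphism: the `n`-th letter
of `f(x)` is the `n`-th letter of the image of a sufficiently long prefix. -/
def mapInf (f : A → List A) (x : ℕ → A) (n : ℕ) : A :=
  (applyF f (List.ofFn (fun i : Fin (n + 1) => x i))).getD n (x 0)

/-- `f` maps every (nonempty) finite word to a quasiperiodic word. -/
def StronglyQPFin (f : A → List A) : Prop :=
  ∀ w : List A, w ≠ [] → Quasiperiodic (applyF f w)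

/-- `f` maps every infinite word to a quasiperiodic infinite word. -/
def StronglyQPInf (f : A → List A) : Prop :=
  ∀ x : ℕ → A, InfQuasiperiodic (mapInf f x)

/-- `f` maps some non-quasiperiodic finite word to a quasiperiodic word. -/
def WeaklyQPFin (f : A → List A) : Prop :=
  ∃ w : List A, ¬ Quasiperiodic w ∧ Quasiperiodic (applyF f w)

/-- `f` maps some non-quasiperiodic infinite word to a quasiperiodic word. -/
def WeaklyQPInf (f : A → List A) : Prop :=
  ∃ x : ℕ → A, ¬ InfQuasiperiodic x ∧ InfQuasiperiodic (mapInf f x)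

/-- The ultimately periodic infinite word `u v^ω` (with default letter `d`
used only when `v` is empty). -/
def ultPer (u v : List A) (d : A) : ℕ → A :=
  fun n => if h : n < u.length then u.get ⟨n, h⟩
           else v.getD ((n - u.length) % v.length) d

/-- A finite word is primitive if it is not a power `u^k` with `k ≥ 2`. -/
def Primitive (w : List A) : Prop :=
  ¬ ∃ (u : List A) (k : ℕ), 2 ≤ k ∧ w = wpow u k

/-- `k`-fold composition of the morphism `f`. -/
def iterF (f : A → List A) : ℕ → A → List A
  | 0, a => [a]
  | (k + 1), a => applyF f (iterF f k a)

lemma applyF_cons (f : A → List A) (a : A) (l : List A) :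
    applyF f (a :: l) = f a ++ applyF f l := by
  simp [applyF]

lemma applyF_append (f : A → List A) (l₁ l₂ : List A) :
    applyF f (l₁ ++ l₂) = applyF f l₁ ++ applyF f l₂ := by
  simp [applyF]

lemma applyF_wpow (f : A → List A) (v : List A) (c : ℕ) :
    applyF f (wpow v c) = wpow (applyF f v) c := by
  simp [applyF, wpow, List.map_flatten, List.flatten_flatten]

lemma length_le_length_applyF {f : A → List A} (hf : NonErasing f) (l : List A) :
    l.length ≤ (applyF f l).length := by
  induction l with
  | nil => simp [applyF]
  | cons a l ih =>
    have := List.length_pos_of_ne_nil (hf a)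
    simp only [applyF_cons, List.length_cons, List.length_append]
    omega

lemma length_wpow (v : List A) (c : ℕ) : (wpow v c).length = c * v.length := by
  simp [wpow]

lemma wpow_succ (v : List A) (c : ℕ) : wpow v (c + 1) = wpow v c ++ v := by
  simp [wpow, List.replicate_succ']

def factor (y : ℕ → A) (i n : ℕ) : List A := List.ofFn fun t : Fin n => y (i + t)

@[simp] lemma length_factor (y : ℕ → A) (i n : ℕ) : (factor y i n).length = n := by
  simp [factor]

@[simp] lemma getElem_factor (y : ℕ → A) (i n t : ℕ) (ht : t < (factor y i n).length) :
    (factor y i n)[t] = y (i + t) := by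
  simp [factor]

lemma mem_factor {y : ℕ → A} {i n : ℕ} {a : A} :
    a ∈ factor y i n ↔ ∃ t < n, y (i + t) = a := by
  simp [factor, List.mem_ofFn, Fin.exists_iff]

lemma factor_add (y : ℕ → A) (i n k : ℕ) :
    factor y i (n + k) = factor y i n ++ factor y (i + n) k := by
  simp [factor, List.ofFn_add, Nat.add_assoc]

lemma factor_succ (y : ℕ → A) (i n : ℕ) : factor y i (n + 1) = y i :: factor y (i + 1) n := by
  simp [factor, List.ofFn_succ, Nat.add_comm, Nat.add_left_comm]

lemma getElem_applyF_factor_add (f : A → List A) (y : ℕ → A) (k d : ℕ) {n : ℕ}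
    (hn : n < (applyF f (factor y 0 k)).length) :
    (applyF f (factor y 0 (k + d)))[n]'(by
      rw [factor_add, applyF_append, List.length_append]; omega) =
    (applyF f (factor y 0 k))[n] := by
  simp only [factor_add, applyF_append]
  exact List.getElem_append_left hn

lemma mapInf_eq_getElem {f : A → List A} (hf : NonErasing f) (y : ℕ → A) {k n : ℕ}
    (hn : n < (applyF f (factor y 0 k)).length) :
    mapInf f y n = (applyF f (factor y 0 k))[n] := by
  have hpref : List.ofFn (fun i : Fin (n + 1) => y i) = factor y 0 (n + 1) := by simp [factor]
  have hlen : n < (applyF f (factor y 0 (n + 1))).length :=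
    Nat.lt_of_lt_of_le (by simp) (length_le_length_applyF hf _)
  rw [mapInf, hpref, List.getD_eq_getElem _ _ hlen]
  rcases le_total k (n + 1) with h | h
  · obtain ⟨d, hd⟩ := Nat.exists_eq_add_of_le h
    simp only [hd]
    exact getElem_applyF_factor_add f y k d hn
  · obtain ⟨d, rfl⟩ := Nat.exists_eq_add_of_le h
    exact (getElem_applyF_factor_add f y (n + 1) d hlen).symm

lemma factor_mapInf {f : A → List A} (hf : NonErasing f) (y : ℕ → A) (i k : ℕ) :
    factor (mapInf f y) (applyF f (factor y 0 i)).length (applyF f (factor y i k)).length =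
      applyF f (factor y i k) := by
  have happ : applyF f (factor y 0 (i + k)) = applyF f (factor y 0 i) ++ applyF f (factor y i k) := by
    rw [factor_add, applyF_append, Nat.zero_add]
  refine List.ext_getElem (by simp) fun t ht _ => ?_
  rw [getElem_factor, mapInf_eq_getElem hf y (k := i + k) (by simp_all)]
  simp only [happ]
  rw [List.getElem_append_right (by omega)]
  simp

lemma mapInf_block {f : A → List A} (hf : NonErasing f) (y : ℕ → A) (k : ℕ) {t : ℕ}
    (ht : t < (f (y k)).length) :
    mapInf f y ((applyF f (factor y 0 k)).length + t) = (f (y k))[t] := by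
  have hk : applyF f (factor y k 1) = f (y k) := by simp [factor, applyF]
  simpa [hk] using List.getElem_of_eq (factor_mapInf hf y k 1) (i := t) (by simpa [hk])

lemma length_applyF_factor_add (f : A → List A) (y : ℕ → A) (i k : ℕ) :
    (applyF f (factor y 0 (i + k))).length =
      (applyF f (factor y 0 i)).length + (applyF f (factor y i k)).length := by
  rw [factor_add, applyF_append, List.length_append, Nat.zero_add]

lemma ultPer_of_lt (u v : List A) (d : A) {p : ℕ} (hp : p < u.length) :
    ultPer u v d p = u[p] := by
  simp [ultPer, hp]

lemma ultPer_add_length (u v : List A) (d : A) {p : ℕ} (hp : u.length ≤ p) :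
    ultPer u v d (p + v.length) = ultPer u v d p := by
  simp only [ultPer, dif_neg (Nat.not_lt.mpr hp), dif_neg (by omega : ¬ p + v.length < u.length)]
  rw [Nat.sub_add_comm hp, Nat.add_mod_right]

lemma ultPer_cons_succ (a : A) (u v : List A) (d : A) (k : ℕ) :
    ultPer (a :: u) v d (k + 1) = ultPer u v d k := by
  simp [ultPer]

lemma ultPer_mem (u v : List A) (d : A) (hv : v ≠ []) (k : ℕ) : ultPer u v d k ∈ u ++ v := by
  unfold ultPer
  split_ifs with h
  · exact List.mem_append_left _ (List.get_mem _ _)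
  · have := Nat.mod_lt (k - u.length) (List.length_pos_of_ne_nil hv)
    exact List.mem_append_right _ (by simp [List.getElem?_eq_getElem this])

lemma ultPer_eq_getElem (u v : List A) (d : A) (c : ℕ) {p : ℕ}
    (hp : p < (u ++ wpow v c).length) : ultPer u v d p = (u ++ wpow v c)[p] := by
  induction c with
  | zero =>
    have hu : p < u.length := by simpa [wpow] using hp
    simp [ultPer_of_lt _ _ _ hu, List.getElem_append_left hu]
  | succ c ih =>
    simp only [wpow_succ, ← List.append_assoc] at hp ⊢
    by_cases hlt : p < (u ++ wpow v c).length
    · rw [ih hlt, List.getElem_append_left hlt]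
    · simp only [List.length_append, length_wpow, Nat.not_lt] at hlt hp
      rw [List.getElem_append_right (by simpa [length_wpow] using hlt)]
      obtain ⟨r, rfl⟩ := Nat.exists_eq_add_of_le hlt
      have hr : r < v.length := by omega
      simp only [ultPer, dif_neg (by omega : ¬ u.length + c * v.length + r < u.length),
        List.length_append, length_wpow]
      rw [show u.length + c * v.length + r - u.length = r + c * v.length by omega,
        Nat.add_mul_mod_self_right, Nat.mod_eq_of_lt hr, List.getD_eq_getElem _ _ hr]
      congr 1; omega

lemma factor_ultPer (u v : List A) (d : A) (c : ℕ) :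
    factor (ultPer u v d) 0 (u ++ wpow v c).length = u ++ wpow v c :=
  List.ext_getElem (by simp) fun p _ hp => by
    rw [getElem_factor, Nat.zero_add, ultPer_eq_getElem u v d c hp]

lemma mapInf_ultPer {f : A → List A} (hf : NonErasing f) (u v : List A) (hv : v ≠ []) (d d' : A) :
    mapInf f (ultPer u v d) = ultPer (applyF f u) (applyF f v) d' := by
  funext n
  have hfv : 1 ≤ (applyF f v).length :=
    (List.length_pos_of_ne_nil hv).trans_le (length_le_length_applyF hf v)
  have himg : applyF f (u ++ wpow v (n + 1)) = applyF f u ++ wpow (applyF f v) (n + 1) := by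
    rw [applyF_append, applyF_wpow]
  have hn : n < (applyF f (u ++ wpow v (n + 1))).length := by
    rw [himg, List.length_append, length_wpow]; nlinarith
  rw [← factor_ultPer u v d (n + 1)] at hn
  rw [mapInf_eq_getElem hf _ hn,
    ultPer_eq_getElem _ _ d' (n + 1) (by rwa [← himg, ← factor_ultPer u v d (n + 1)])]
  simp only [factor_ultPer, himg]

def CoveredAt (q : List A) (x : ℕ → A) (i : ℕ) : Prop :=
  ∃ j, j ≤ i ∧ i < j + q.length ∧ ∀ t (ht : t < q.length), x (j + t) = q.get ⟨t, ht⟩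

lemma InfCovers.apply_mem {q : List A} {y : ℕ → A} (hy : InfCovers q y) (p : ℕ) : y p ∈ q := by
  obtain ⟨j, hjp, hpj, hocc⟩ := hy p
  rw [show p = j + (p - j) by omega, hocc _ (by omega)]
  exact List.get_mem _ _

lemma InfCovers.length_pos {q : List A} {y : ℕ → A} (hy : InfCovers q y) : 0 < q.length := by
  obtain ⟨j, hj, hq, -⟩ := hy 0
  omega

lemma InfCovers.apply_of_lt {q : List A} {y : ℕ → A} (hy : InfCovers q y) {t : ℕ}
    (ht : t < q.length) : y t = q[t] := by
  obtain ⟨j, hj, -, hocc⟩ := hy 0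
  simpa [Nat.le_zero.mp hj] using hocc t ht

lemma coveredAt_of_agree {q : List A} {x y : ℕ → A} (hy : InfCovers q y) {s L i : ℕ}
    (hxy : ∀ e < L, x e = y (s + e)) (hi : q.length ≤ i + 1) (hiL : i + q.length ≤ L) :
    CoveredAt q x i := by
  obtain ⟨j, hj, hij, hocc⟩ := hy (s + i)
  refine ⟨j - s, by omega, by omega, fun t ht => ?_⟩
  rw [hxy _ (by omega), ← hocc t ht]
  congr 1; omega

lemma infCovers_of_periodic {q : List A} {x : ℕ → A} {s m : ℕ} (hm : 0 < m)
    (hper : ∀ p, s ≤ p → x (p + m) = x p) (hbase : ∀ i < s + q.length + m, CoveredAt q x i) :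
    InfCovers q x := by
  intro i
  induction i using Nat.strong_induction_on with
  | _ i ih =>
    by_cases hi : i < s + q.length + m
    · exact hbase i hi
    obtain ⟨j, hj, hij, hocc⟩ := ih (i - m) (by omega)
    refine ⟨j + m, by omega, by omega, fun t ht => ?_⟩
    rw [Nat.add_right_comm, hper _ (by omega), hocc]

/-- The window equality makes `y` locally `m`-periodic around `i + n`, so the word
`y[i, i + n) y[i + n, i + n + m)^ω` agrees with `y` shifted by `i` on its first
`n + m + |q|` letters and is `m`-periodic from `n - |q|` on; the occurrences of `q` in `y`
therefore cover its first period, and periodicity carries the covering further. -/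
theorem infCovers_ultPer_factor {q : List A} {y : ℕ → A} (hy : InfCovers q y) {i n m : ℕ}
    (hpre : ∀ t (ht : t < q.length), y (i + t) = q[t]) (hn : q.length ≤ n) (hm : q.length ≤ m)
    (hwin : factor y (i + n - q.length) (2 * q.length) =
      factor y (i + n + m - q.length) (2 * q.length)) (d : A) :
    InfCovers q (ultPer (factor y i n) (factor y (i + n) m) d) := by
  have hlocal : ∀ e < 2 * q.length, y (i + n - q.length + e + m) = y (i + n - q.length + e) :=
    fun e he => by
      have := congrArg (·[e]?) hwin
      simp only [factor, List.getElem?_ofFn] at this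
      simp [he] at this
      rw [this]; congr 1; omega
  have hfirst : ∀ p < n + m, ultPer (factor y i n) (factor y (i + n) m) d p = y (i + p) :=
    fun p hp => by
      rw [ultPer_eq_getElem _ _ d 1 (by simpa [wpow] using hp)]
      simp only [wpow, List.replicate_one, List.flatten_singleton, ← factor_add, getElem_factor]
  have hzper : ∀ p, n ≤ p → ultPer (factor y i n) (factor y (i + n) m) d (p + m) =
      ultPer (factor y i n) (factor y (i + n) m) d p := fun p hp => by
    simpa using ultPer_add_length (factor y i n) (factor y (i + n) m) d (by simpa using hp)
  set z := ultPer (factor y i n) (factor y (i + n) m) d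
  have hagree : ∀ p < n + m + q.length, z p = y (i + p) := fun p hp => by
    by_cases hpm : p < n + m
    · exact hfirst p hpm
    rw [show p = p - m + m by omega, hzper _ (by omega), hfirst _ (by omega),
      show i + (p - m + m) = i + n - q.length + (p - m - n + q.length) + m by omega,
      hlocal _ (by omega)]
    congr 1; omega
  have hper : ∀ p, n - q.length ≤ p → z (p + m) = z p := fun p hp => by
    by_cases hpn : n ≤ p
    · exact hzper p hpn
    rw [hfirst _ (by omega), hfirst _ (by omega),
      show i + (p + m) = i + n - q.length + (p + q.length - n) + m by omega, hlocal _ (by omega)]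
    congr 1; omega
  refine infCovers_of_periodic (hy.length_pos.trans_le hm) hper fun j hj => ?_
  by_cases hjq : q.length ≤ j + 1
  · exact coveredAt_of_agree hy hagree hjq (by omega)
  · exact ⟨0, by omega, by omega, fun t ht => by simp [hagree t (by omega), hpre t ht]⟩

lemma exists_lt_factor_eq {y : ℕ → A} {S : Set A} (hS : S.Finite) (hy : ∀ p, y p ∈ S)
    (pos : ℕ → ℕ) (L : ℕ) : ∃ k₁ k₂, k₁ < k₂ ∧ factor y (pos k₁) L = factor y (pos k₂) L := by
  have := hS.to_subtype
  obtain ⟨a, b, hab, h⟩ := Finite.exists_ne_map_eq_of_infinite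
    fun k (t : Fin L) => (⟨y (pos k + t), hy _⟩ : S)
  have hfac : factor y (pos a) L = factor y (pos b) L :=
    List.ofFn_inj.mpr (funext fun t => congrArg Subtype.val (congrFun h t))
  rcases hab.lt_or_gt with hlt | hlt
  · exact ⟨a, b, hlt, hfac⟩
  · exact ⟨b, a, hlt, hfac.symm⟩

lemma not_infQuasiperiodic_of_ne_apply_zero {x : ℕ → A} (hx : ∀ k, x (k + 1) ≠ x 0) :
    ¬ InfQuasiperiodic x := by
  rintro ⟨q, hq, hcov⟩
  have hql := List.length_pos_of_ne_nil hq
  obtain ⟨j, hj, hqj, hocc⟩ := hcov q.length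
  have h0 : x j = x 0 := by
    simpa [hcov.apply_of_lt hql] using hocc 0 hql
  obtain ⟨k, rfl⟩ : ∃ k, j = k + 1 := ⟨j - 1, by omega⟩
  exact hx k h0

lemma not_infQuasiperiodic_ultPer_cons {a : A} {u v : List A} (hv : v ≠ []) (hu : a ∉ u)
    (hva : a ∉ v) (d : A) : ¬ InfQuasiperiodic (ultPer (a :: u) v d) := by
  refine not_infQuasiperiodic_of_ne_apply_zero fun k => ?_
  rw [ultPer_cons_succ, ultPer_of_lt (a :: u) v d (p := 0) (Nat.zero_lt_succ _), List.getElem_cons_zero]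
  intro h
  rcases List.mem_append.mp (h ▸ ultPer_mem u v d hv k) with h | h
  exacts [hu h, hva h]

lemma exists_last_eq_apply_zero (w : ℕ → A) {N : ℕ} (hN : ∀ n, N ≤ n → w n ≠ w 0) :
    ∃ s, w s = w 0 ∧ ∀ t, s < t → w t ≠ w 0 := by
  classical
  refine ⟨Nat.findGreatest (fun t => w t = w 0) N,
    Nat.findGreatest_spec (P := fun t => w t = w 0) (Nat.zero_le N) rfl, fun t ht => ?_⟩
  by_cases htN : t ≤ N
  · exact Nat.findGreatest_is_greatest ht htN
  · exact hN t (by omega)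

theorem infQP_mapInf_ultPer_factor {f : A → List A} (hf : NonErasing f) {w : ℕ → A} {q : List A}
    (hq : InfQP q (mapInf f w)) (hlen : ∀ α, q.length ≤ (f α).length) {s n m : ℕ}
    (hs : w s = w 0) (hn : 0 < n) (hm : 0 < m)
    (hwin : factor (mapInf f w) ((applyF f (factor w 0 (s + n))).length - q.length) (2 * q.length) =
      factor (mapInf f w) ((applyF f (factor w 0 (s + n + m))).length - q.length) (2 * q.length))
    (d : A) : InfQP q (mapInf f (ultPer (factor w s n) (factor w (s + n) m) d)) := by
  have hlong : ∀ i k, 0 < k → q.length ≤ (applyF f (factor w i k)).length := fun i k hk => by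
    obtain ⟨k, rfl⟩ : ∃ k', k = k' + 1 := ⟨k - 1, by omega⟩
    rw [factor_succ, applyF_cons, List.length_append]
    exact (hlen _).trans (Nat.le_add_right _ _)
  have hpre : ∀ t (ht : t < q.length),
      mapInf f w ((applyF f (factor w 0 s)).length + t) = q[t] := fun t ht => by
    have hq_le := hlen (w 0)
    calc mapInf f w ((applyF f (factor w 0 s)).length + t)
        = (f (w s))[t]'(by rw [hs]; omega) := mapInf_block hf w s _
      _ = (f (w 0))[t] := by simp only [hs]
      _ = mapInf f w t := by simpa [factor, applyF] using (mapInf_block hf w 0 (by omega)).symm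
      _ = q[t] := hq.2.apply_of_lt ht
  rw [length_applyF_factor_add f w (s + n) m, length_applyF_factor_add f w s n] at hwin
  refine ⟨hq.1, ?_⟩
  rw [mapInf_ultPer hf _ _ (List.ne_nil_of_length_pos (by simpa using hm)) _ (w 0),
    ← factor_mapInf hf w s, ← factor_mapInf hf w (s + n), length_applyF_factor_add]
  exact infCovers_ultPer_factor hq.2 hpre (hlong _ _ hn) (hlong _ _ hm) hwin (w 0)

theorem stmt19 {A : Type*} [DecidableEq A] (f : A → List A)
    (hf : NonErasing f) (w : ℕ → A) (q : List A)
    (hq : InfQP q (mapInf f w)) (hlen : ∀ α : A, 2 * q.length ≤ (f α).length)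
    (hnr : ∃ N : ℕ, ∀ n, N ≤ n → w n ≠ w 0) :
    (∃ (u v : List A) (b : A),
      u.count (w 0) = 0 ∧ v.count (w 0) = 0 ∧ b ≠ w 0 ∧
      ¬ InfQuasiperiodic (ultPer ([w 0] ++ u) ([b] ++ v) (w 0)) ∧
      InfQP q (mapInf f (ultPer ([w 0] ++ u) ([b] ++ v) (w 0)))) ∧
    WeaklyQPInf f := by
  obtain ⟨N, hN⟩ := hnr
  obtain ⟨s, hs, hlast⟩ := exists_last_eq_apply_zero w hN
  have hfree : ∀ i n, s < i → w 0 ∉ factor w i n := fun i n hi hmem => by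
    obtain ⟨t, -, ht⟩ := mem_factor.mp hmem
    exact hlast _ (by omega) ht
  -- Two boundaries between images of letters after the last `w 0` whose surrounding windows
  -- of length `2|q|` in `f(w)` coincide; `b v` is the factor of `w` between them.
  obtain ⟨k₁, k₂, hk, hwin⟩ := exists_lt_factor_eq q.finite_toSet hq.2.apply_mem
    (fun k => (applyF f (factor w 0 (s + (k + 1)))).length - q.length) (2 * q.length)
  set u := factor w (s + 1) k₁
  set b := w (s + (k₁ + 1))
  set v := factor w (s + (k₁ + 1) + 1) (k₂ - k₁ - 1)
  have hU : [w 0] ++ u = factor w s (k₁ + 1) := by rw [factor_succ, hs]; rfl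
  have hV : [b] ++ v = factor w (s + (k₁ + 1)) (k₂ - k₁) := by
    rw [show k₂ - k₁ = k₂ - k₁ - 1 + 1 by omega, factor_succ]; rfl
  have hnotqp : ¬ InfQuasiperiodic (ultPer ([w 0] ++ u) ([b] ++ v) (w 0)) :=
    not_infQuasiperiodic_ultPer_cons (List.cons_ne_nil _ _) (hfree _ _ (by omega))
      (by simpa using ⟨(hlast _ (by omega)).symm, hfree _ _ (by omega)⟩) _
  have hqp : InfQP q (mapInf f (ultPer ([w 0] ++ u) ([b] ++ v) (w 0))) := by
    rw [hU, hV]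
    refine infQP_mapInf_ultPer_factor hf hq (fun α => (Nat.le_mul_of_pos_left _ two_pos).trans
      (hlen α)) hs (by omega) (by omega) ?_ _
    rwa [show s + (k₁ + 1) + (k₂ - k₁) = s + (k₂ + 1) by omega]
  exact ⟨⟨u, v, b, List.count_eq_zero.mpr (hfree _ _ (by omega)),
    List.count_eq_zero.mpr (hfree _ _ (by omega)), hlast _ (by omega), hnotqp, hqp⟩,
    _, hnotqp, q, hqp⟩

end QPm
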